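/- (Core of Proposition 3.2: congruent point sets admit the same number of trilateration extensions.) Let K ≥ 1, let p, q : Fin K → ℝ^K be two families of points with p affinely independent and dist(p i, p j) = dist(q i, q j) for all i, j, and let d : Fin K → ℝ. Suppose there exists y₀ ∈ ℝ^K with y₀ ∉ affineSpan ℝ (Set.range p) and dist(y₀, p i) = d i for all i. Then the set {z ∈ ℝ^K : ∀ i, dist(z, q i) = d i} has exactly two elements. -/

import Mathlib

/-!
An affine isometry of ℝ^K carries p to q: the edge vectors `p i - p i₀` and `q i - q i₀` have
the same Gram matrix, so they span isometric subspaces, and the isometry extends to all of ℝ^K.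
It therefore suffices to count the solutions for p. If z is at distance `d i` from every `p i`,
then the hyperplane `s = affineSpan ℝ (range p)` lies in the perpendicular bisector of `y₀` and
`z`, so `z` is at the same distance as `y₀` from every point of `s`. As `sᗮ` is a line, `z` is
either `y₀` or its mirror image in `s`, and these differ because `y₀ ∉ s`.
-/

open Module EuclideanGeometry AffineSubspace
open scoped RealInnerProductSpace

lemma eq_or_eq_neg_of_norm_eq_of_finrank_eq_one {E : Type*} [NormedAddCommGroup E]
    [NormedSpace ℝ E] (hE : finrank ℝ E = 1) {u v : E} (huv : ‖u‖ = ‖v‖) : u = v ∨ u = -v := by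
  rcases eq_or_ne v 0 with rfl | hv
  · exact Or.inl (norm_eq_zero.mp (by simpa using huv))
  obtain ⟨c, rfl⟩ := (finrank_eq_one_iff_of_nonzero' v hv).mp hE u
  rw [norm_smul, Real.norm_eq_abs, mul_eq_right₀ (norm_ne_zero_iff.mpr hv)] at huv
  rcases (abs_eq zero_le_one).mp huv with rfl | rfl <;> simp

lemma LinearIndependent.exists_linearIsometry_of_inner_eq {ι E F : Type*}
    [NormedAddCommGroup E] [InnerProductSpace ℝ E] [NormedAddCommGroup F] [InnerProductSpace ℝ F]
    {v : ι → E} (hv : LinearIndependent ℝ v) {w : ι → F} (h : ∀ i j, ⟪v i, v j⟫ = ⟪w i, w j⟫) :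
    ∃ L : Submodule.span ℝ (Set.range v) →ₗᵢ[ℝ] F,
      ∀ i, L ⟨v i, Submodule.subset_span (Set.mem_range_self i)⟩ = w i := by
  set b := Basis.span hv
  set T := b.constr ℝ w
  have hTb : ∀ i, T (b i) = w i := b.constr_basis ℝ w
  have hT : ∀ x y, ⟪T x, T y⟫ = ⟪x, y⟫ := by
    have : (innerₗ F).compl₁₂ T T =
        (innerₗ E).compl₁₂ (Submodule.subtype _) (Submodule.subtype _) :=
      LinearMap.ext_basis b b fun i j => by
        rw [LinearMap.compl₁₂_apply, LinearMap.compl₁₂_apply, hTb, hTb, innerₗ_apply_apply,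
          innerₗ_apply_apply, Submodule.subtype_apply, Submodule.subtype_apply, Basis.span_apply,
          Basis.span_apply, h]
    exact fun x y => LinearMap.congr_fun₂ this x y
  exact ⟨T.isometryOfInner hT, fun i => by simpa [b, Basis.span_apply] using hTb i⟩

section EuclideanAffine

variable {V P : Type*} [NormedAddCommGroup V] [InnerProductSpace ℝ V] [MetricSpace P]
  [NormedAddTorsor V P]

lemma inner_vsub_vsub_eq_of_dist_eq {V₂ P₂ ι : Type*} [NormedAddCommGroup V₂]
    [InnerProductSpace ℝ V₂] [MetricSpace P₂] [NormedAddTorsor V₂ P₂] {p : ι → P} {q : ι → P₂}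
    (h : ∀ i j, dist (p i) (p j) = dist (q i) (q j)) (i j k : ι) :
    ⟪p i -ᵥ p k, p j -ᵥ p k⟫ = ⟪q i -ᵥ q k, q j -ᵥ q k⟫ := by
  simp only [real_inner_eq_norm_mul_self_add_norm_mul_self_sub_norm_sub_mul_self_div_two,
    vsub_sub_vsub_cancel_right, ← dist_eq_norm_vsub, h]

theorem AffineIndependent.exists_affineIsometryEquiv_of_dist_eq [FiniteDimensional ℝ V]
    {ι : Type*} {p q : ι → P} (hp : AffineIndependent ℝ p)
    (h : ∀ i j, dist (p i) (p j) = dist (q i) (q j)) :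
    ∃ Φ : P ≃ᵃⁱ[ℝ] P, ∀ i, Φ (p i) = q i := by
  rcases isEmpty_or_nonempty ι with _ | ⟨⟨i₀⟩⟩
  · exact ⟨AffineIsometryEquiv.refl ℝ P, isEmptyElim⟩
  have hv := (affineIndependent_iff_linearIndependent_vsub ℝ p i₀).mp hp
  obtain ⟨L, hL⟩ := hv.exists_linearIsometry_of_inner_eq
    (w := fun i : {i // i ≠ i₀} => q i -ᵥ q i₀) fun i j => inner_vsub_vsub_eq_of_dist_eq h i j i₀
  let L' : V ≃ₗᵢ[ℝ] V := L.extend.toLinearIsometryEquiv rfl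
  refine ⟨(AffineIsometryEquiv.vaddConst ℝ (p i₀)).symm.trans
    (L'.toAffineIsometryEquiv.trans (AffineIsometryEquiv.vaddConst ℝ (q i₀))), fun i => ?_⟩
  by_cases hi : i = i₀
  · subst hi; simp
  · have := L.extend_apply ⟨_, Submodule.subset_span (Set.mem_range_self ⟨i, hi⟩)⟩
    simp [L', this, hL ⟨i, hi⟩]

lemma forall_mem_affineSpan_dist_eq_iff {S : Set P} {y z : P} :
    (∀ c ∈ affineSpan ℝ S, dist z c = dist y c) ↔ ∀ c ∈ S, dist z c = dist y c := by
  refine ⟨fun h c hc => h c (subset_affineSpan ℝ S hc), fun h c hc => ?_⟩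
  have hS : S ⊆ perpBisector z y := fun c hc => mem_perpBisector_iff_dist_eq'.mpr (h c hc)
  exact mem_perpBisector_iff_dist_eq'.mp (affineSpan_le.mpr hS hc)

lemma vsub_mem_direction_orthogonal_of_forall_dist_eq {s : AffineSubspace ℝ P} {y z : P}
    (h : ∀ c ∈ s, dist z c = dist y c) : y -ᵥ z ∈ s.directionᗮ := by
  have hs : s ≤ perpBisector z y := fun c hc => mem_perpBisector_iff_dist_eq'.mpr (h c hc)
  have hdir := direction_perpBisector z y ▸ direction_le hs
  exact Submodule.orthogonal_le hdir
    (Submodule.le_orthogonal_orthogonal _ (Submodule.mem_span_singleton_self _))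

lemma AffineIndependent.finrank_direction_affineSpan_orthogonal [FiniteDimensional ℝ V]
    {ι : Type*} [Fintype ι] [Nonempty ι] {p : ι → P} (hp : AffineIndependent ℝ p)
    (hcard : Fintype.card ι = finrank ℝ V) :
    finrank ℝ (affineSpan ℝ (Set.range p)).directionᗮ = 1 := by
  have h₁ := hp.finrank_vectorSpan_add_one
  have h₂ := Submodule.finrank_add_finrank_orthogonal (affineSpan ℝ (Set.range p)).direction
  rw [direction_affineSpan] at h₂ ⊢
  omega

variable (s : AffineSubspace ℝ P) [Nonempty s] [s.direction.HasOrthogonalProjection]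

lemma eq_or_eq_reflection_of_forall_dist_eq (hs : finrank ℝ s.directionᗮ = 1) {y z : P}
    (h : ∀ c ∈ s, dist z c = dist y c) : z = y ∨ z = reflection s y := by
  set c : P := (orthogonalProjection s y : P)
  have hy : y -ᵥ c ∈ s.directionᗮ := vsub_orthogonalProjection_mem_direction_orthogonal s y
  have hz : z -ᵥ c ∈ s.directionᗮ := by
    rw [← vsub_add_vsub_cancel z y c, ← neg_vsub_eq_vsub_rev y z]
    exact add_mem (neg_mem (vsub_mem_direction_orthogonal_of_forall_dist_eq h)) hy
  have hnorm : ‖(⟨z -ᵥ c, hz⟩ : s.directionᗮ)‖ = ‖(⟨y -ᵥ c, hy⟩ : s.directionᗮ)‖ := by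
    change ‖z -ᵥ c‖ = ‖y -ᵥ c‖
    rw [← dist_eq_norm_vsub, ← dist_eq_norm_vsub]
    exact h c (orthogonalProjection_mem y)
  rw [reflection_apply', ← vsub_vadd z c]
  rcases eq_or_eq_neg_of_norm_eq_of_finrank_eq_one hs hnorm with heq | heq <;>
    simp only [Subtype.ext_iff, NegMemClass.coe_neg] at heq
  · exact Or.inl (by rw [heq, vsub_vadd])
  · exact Or.inr (by rw [heq, neg_vsub_eq_vsub_rev])

theorem setOf_forall_dist_eq_eq_pair_reflection (hs : finrank ℝ s.directionᗮ = 1) (y : P) :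
    {z | ∀ c ∈ s, dist z c = dist y c} = {y, reflection s y} := by
  ext z
  refine ⟨eq_or_eq_reflection_of_forall_dist_eq s hs, ?_⟩
  rintro (rfl | rfl) c hc
  · rfl
  · rw [dist_comm, dist_reflection_eq_of_mem s hc, dist_comm]

end EuclideanAffine

/-- If a family p of K affinely independent points in ℝ^K admits a trilateration
solution y₀ outside its affine span, then for any family q congruent to p (same
pairwise distances), the trilateration solution set for q has exactly two
elements. -/
theorem trilateration_congruent_two (K : ℕ) (hK : 1 ≤ K)
    (p q : Fin K → EuclideanSpace ℝ (Fin K)) (hp : AffineIndependent ℝ p)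
    (hpq : ∀ i j, dist (p i) (p j) = dist (q i) (q j))
    (d : Fin K → ℝ)
    (y₀ : EuclideanSpace ℝ (Fin K)) (hy₀ : y₀ ∉ affineSpan ℝ (Set.range p))
    (hd : ∀ i, dist y₀ (p i) = d i) :
    {z : EuclideanSpace ℝ (Fin K) | ∀ i, dist z (q i) = d i}.encard = 2 := by
  have : Nonempty (Fin K) := ⟨⟨0, hK⟩⟩
  set s := affineSpan ℝ (Set.range p)
  have hs : finrank ℝ s.directionᗮ = 1 :=
    hp.finrank_direction_affineSpan_orthogonal (by simp)
  obtain ⟨Φ, hΦ⟩ := hp.exists_affineIsometryEquiv_of_dist_eq hpq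
  have hpre : Φ ⁻¹' {z | ∀ i, dist z (q i) = d i} = {z | ∀ c ∈ s, dist z c = dist y₀ c} := by
    ext z
    simp only [Set.mem_preimage, Set.mem_ofPred_eq, ← hΦ, Φ.dist_map, ← hd]
    rw [forall_mem_affineSpan_dist_eq_iff, Set.forall_mem_range]
  rw [← Set.encard_preimage_of_bijective Φ.bijective, hpre,
    setOf_forall_dist_eq_eq_pair_reflection s hs, Set.encard_pair]
  exact fun h => hy₀ ((reflection_eq_self_iff y₀).mp h.symm)
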